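/- arXiv:1710.07747 — 7 statements merged into one kernel-verified Lean document; each statement's English description precedes it below -/
import Mathlib

section
/- Let Ω be a real symmetric positive definite matrix with block decomposition Ω = Ω_L + Ω_D + Ω_U into block-strictly-lower-triangular, block-diagonal, and block-strictly-upper-triangular parts (with respect to q×q blocks), and let C = Ω⁻¹ and G = −(Ω_L + Ω_D)⁻¹ Ω_U be the Gauss–Seidel operator. Then C = G C Gᵀ + (Ω_L + Ω_D)⁻¹ Ω_D (Ω_L + Ω_D)⁻ᵀ. -/
open Matrix
/-- Block strictly-lower-triangular part (with respect to `q × q` blocks). -/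
def Matrix.blkLower {m q : ℕ} (Ω : Matrix (Fin m × Fin q) (Fin m × Fin q) ℝ) :
    Matrix (Fin m × Fin q) (Fin m × Fin q) ℝ :=
  Matrix.of fun p r => if r.1 < p.1 then Ω p r else 0

/-- Block-diagonal part (with respect to `q × q` blocks). -/
def Matrix.blkDiag {m q : ℕ} (Ω : Matrix (Fin m × Fin q) (Fin m × Fin q) ℝ) :
    Matrix (Fin m × Fin q) (Fin m × Fin q) ℝ :=
  Matrix.of fun p r => if p.1 = r.1 then Ω p r else 0

/-- Block strictly-upper-triangular part (with respect to `q × q` blocks). -/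
def Matrix.blkUpper {m q : ℕ} (Ω : Matrix (Fin m × Fin q) (Fin m × Fin q) ℝ) :
    Matrix (Fin m × Fin q) (Fin m × Fin q) ℝ :=
  Matrix.of fun p r => if p.1 < r.1 then Ω p r else 0

/-!
With `M = Ω_L + Ω_D` we have `Ω = M + Ω_U`, so `G = 1 - M⁻¹ Ω`, and symmetry of `Ω` gives
`M + Mᵀ = Ω + Ω_D`. The identity then holds for any invertible `Ω`, `M`, `N` and any `D` with
`M + N = Ω + D`: expanding `(1 - M⁻¹ Ω) Ω⁻¹ (1 - Ω N⁻¹) + M⁻¹ D N⁻¹`, the terms `-M⁻¹ - N⁻¹`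
and `M⁻¹ Ω N⁻¹` cancel against `M⁻¹ (M + N - Ω) N⁻¹`, leaving `Ω⁻¹`.
-/

namespace Matrix

section General

variable {n R : Type*} [Fintype n] [DecidableEq n] [CommRing R]

theorem neg_inv_mul_eq_one_sub_inv_mul_add {M : Matrix n n R} (hM : IsUnit M)
    (U : Matrix n n R) : -(M⁻¹ * U) = 1 - M⁻¹ * (M + U) := by
  rw [mul_add, nonsing_inv_mul _ ((isUnit_iff_isUnit_det M).mp hM)]
  abel

theorem inv_eq_of_add_eq_add {A M N D : Matrix n n R} (hA : IsUnit A) (hM : IsUnit M)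
    (hN : IsUnit N) (h : M + N = A + D) :
    A⁻¹ = (1 - M⁻¹ * A) * A⁻¹ * (1 - A * N⁻¹) + M⁻¹ * D * N⁻¹ := by
  obtain rfl := eq_sub_of_add_eq' h.symm
  rw [isUnit_iff_isUnit_det] at hA hM hN
  simp only [sub_mul, mul_sub, mul_add, add_mul, one_mul, mul_one, Matrix.mul_assoc,
    nonsing_inv_mul_cancel_left _ _ hA, nonsing_inv_mul _ hM, mul_nonsing_inv _ hN,
    mul_nonsing_inv _ hA]
  abel

end General

section Blocks

variable {m q : ℕ} (Ω : Matrix (Fin m × Fin q) (Fin m × Fin q) ℝ)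

theorem blkLower_add_blkDiag_add_blkUpper : Ω.blkLower + Ω.blkDiag + Ω.blkUpper = Ω := by
  ext p r
  simp only [add_apply, blkLower, blkDiag, blkUpper, of_apply]
  rcases lt_trichotomy p.1 r.1 with h | h | h
  · simp [h, h.ne, h.not_gt]
  · simp [h]
  · simp [h, h.ne', h.not_gt]

theorem transpose_blkLower : Ω.blkLowerᵀ = Ωᵀ.blkUpper := by
  ext p r
  simp [blkLower, blkUpper]

theorem transpose_blkDiag : Ω.blkDiagᵀ = Ωᵀ.blkDiag := by
  ext p r
  simp [blkDiag, eq_comm]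

theorem IsSymm.blkLower_add_blkDiag_add_transpose {Ω : Matrix (Fin m × Fin q) (Fin m × Fin q) ℝ}
    (hΩ : Ω.IsSymm) :
    Ω.blkLower + Ω.blkDiag + (Ω.blkLower + Ω.blkDiag)ᵀ = Ω + Ω.blkDiag := by
  rw [transpose_add, transpose_blkLower, transpose_blkDiag, hΩ.eq, ← add_assoc,
    blkLower_add_blkDiag_add_blkUpper]

end Blocks

end Matrix

/-- for a symmetric positive definite `Ω` with block decomposition
`Ω = Ω_L + Ω_D + Ω_U` and `C = Ω⁻¹`, the Gauss–Seidel operator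
`G = -(Ω_L + Ω_D)⁻¹ Ω_U` satisfies `C = G C Gᵀ + (Ω_L + Ω_D)⁻¹ Ω_D (Ω_L + Ω_D)⁻ᵀ`. -/
theorem gaussSeidel_covariance_identity
    {m q : ℕ} (Ω : Matrix (Fin m × Fin q) (Fin m × Fin q) ℝ) (hΩ : Ω.PosDef)
    (hInv : IsUnit (Ω.blkLower + Ω.blkDiag)) :
    Ω⁻¹ =
      (-((Ω.blkLower + Ω.blkDiag)⁻¹ * Ω.blkUpper)) * Ω⁻¹ *
          (-((Ω.blkLower + Ω.blkDiag)⁻¹ * Ω.blkUpper))ᵀ +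
        (Ω.blkLower + Ω.blkDiag)⁻¹ * Ω.blkDiag *
          ((Ω.blkLower + Ω.blkDiag)⁻¹)ᵀ := by
  have hsymm : Ω.IsSymm := isHermitian_iff_isSymm.mp hΩ.isHermitian
  rw [neg_inv_mul_eq_one_sub_inv_mul_add hInv, blkLower_add_blkDiag_add_blkUpper,
    transpose_sub, transpose_one, transpose_mul, hsymm.eq, transpose_nonsing_inv]
  exact inv_eq_of_add_eq_add hΩ.isUnit hInv ((isUnit_transpose _).mpr hInv)
    hsymm.blkLower_add_blkDiag_add_transpose
end

section
/- Let Ω be a real symmetric positive definite qm×qm matrix that is q-block-tridiagonal (Ω_{i,j} = 0 whenever |i−j| > 1 as block indices), with condition number 𝒞. Let G = −(Ω_L + Ω_D)⁻¹ Ω_U be the Gauss–Seidel operator and C = Ω⁻¹. Then G C Gᵀ ⪯ β·C with β = 𝒞(1−𝒞⁻¹)² / (1 + 𝒞(1−𝒞⁻¹)²). -/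
open Matrix

/-!
Write `Ω = W + D + U` for the block lower, diagonal and upper parts and `L = W + D`. Then
`U = Wᵀ` and `L Ω⁻¹ Lᵀ = D + U Ω⁻¹ Uᵀ`, so after conjugating by `L⁻¹` the claim becomes
`U Ω⁻¹ Uᵀ ⪯ s D` with `s = (λmax - λmin)² / (λmin λmax)`, because `β = s / (1 + s)`.
Since `Ω⁻¹ ⪯ λmin⁻¹`, it suffices that `U W ⪯ λmin s D`. For block-tridiagonal `Ω` the product
`U W` is block diagonal, hence equal to the block-diagonal part of `Ω² - W U - D²`. Pinching
`(Ω - λmin)(λmax - Ω) ⪰ 0` to its diagonal blocks and dropping the block-diagonal part of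
`W U = Uᵀ U ⪰ 0` gives `U W ⪯ (D - λmin)(λmax - D)`, and `λmin ⪯ D ⪯ λmax` bounds the
right-hand side by `λmin s D`.
-/

open scoped MatrixOrder ComplexOrder

namespace Matrix

section LoewnerOrder

variable {𝕜 n : Type*} [RCLike 𝕜] [DecidableEq n] {A : Matrix n n 𝕜} {a b : ℝ}

theorem posDef_of_smul_one_le (ha : 0 < a) (h : a • 1 ≤ A) : A.PosDef := by
  simpa using (PosDef.one.smul ha).posSemidef_add (le_iff.mp h)

theorem le_of_smul_one_le_smul_one [Nonempty n] (h : a • (1 : Matrix n n 𝕜) ≤ b • 1) :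
    a ≤ b := by
  obtain ⟨i⟩ := ‹Nonempty n›
  have := (le_iff.mp h).diag_nonneg (i := i)
  rwa [← sub_smul, Matrix.smul_apply, one_apply_eq, RCLike.real_smul_eq_coe_mul, mul_one,
    RCLike.ofReal_nonneg, sub_nonneg] at this

variable [Fintype n]

theorem commute_sub_smul_one_smul_one_sub (A : Matrix n n 𝕜) (a b : ℝ) :
    Commute (A - a • 1) (b • 1 - A) :=
  (((Commute.one_right A).smul_right b).sub_right (Commute.refl A)).sub_left
    ((Commute.one_left _).smul_left a)

theorem inv_le_smul_one_of_smul_one_le (ha : 0 < a) (h : a • 1 ≤ A) : A⁻¹ ≤ a⁻¹ • 1 := by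
  have hA := posDef_of_smul_one_le ha h
  have hdet : IsUnit A.det := (isUnit_iff_isUnit_det A).mp hA.isUnit
  have hcomm : Commute (A - a • 1) A⁻¹ :=
    (show Commute A A⁻¹ from (mul_nonsing_inv A hdet).trans (nonsing_inv_mul A hdet).symm).sub_left
      ((Commute.one_left _).smul_left a)
  have key : 0 ≤ (A - a • 1) * A⁻¹ :=
    hcomm.mul_nonneg (sub_nonneg.mpr h) hA.inv.posSemidef.nonneg
  rw [sub_mul, mul_nonsing_inv A hdet, smul_mul_assoc, one_mul, sub_nonneg] at key
  simpa [smul_smul, inv_mul_cancel₀ ha.ne'] using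
    smul_le_smul_of_nonneg_left key (inv_nonneg.mpr ha.le)

theorem mul_self_le_of_smul_one_le_of_le_smul_one (ha : a • 1 ≤ A) (hb : A ≤ b • 1) :
    A * A ≤ (a + b) • A - (a * b) • 1 := by
  rw [← sub_nonneg]
  convert (commute_sub_smul_one_smul_one_sub A a b).mul_nonneg (sub_nonneg.mpr ha)
    (sub_nonneg.mpr hb) using 1
  simp only [sub_mul, mul_sub, smul_mul_assoc, mul_smul_comm, one_mul, mul_one]
  module

theorem add_smul_sub_smul_one_sub_mul_self_le (ha₀ : 0 ≤ a) (hb₀ : 0 < b) (ha : a • 1 ≤ A)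
    (hb : A ≤ b • 1) : (a + b) • A - (a * b) • 1 - A * A ≤ ((b - a) ^ 2 / b) • A := by
  have hA : 0 ≤ A - a • 1 := sub_nonneg.mpr ha
  have hB : 0 ≤ b • 1 - A := sub_nonneg.mpr hb
  -- `(b-a)²x/b - (x-a)(b-x) = (x-a)² + (a/b)(b-x)(b-a)`, and `b - a = (b-x) + (x-a)`
  have key : 0 ≤ (A - a • 1) * (A - a • 1) +
      (a / b) • ((b • 1 - A) * (b • 1 - A) + (A - a • 1) * (b • 1 - A)) :=
    add_nonneg ((Commute.refl _).mul_nonneg hA hA) <| smul_nonneg (div_nonneg ha₀ hb₀.le) <|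
      add_nonneg ((Commute.refl _).mul_nonneg hB hB)
        ((commute_sub_smul_one_smul_one_sub A a b).mul_nonneg hA hB)
  rw [← sub_nonneg]
  convert key using 1
  simp only [sub_mul, mul_sub, smul_mul_assoc, mul_smul_comm, one_mul, mul_one, smul_add,
    smul_sub, smul_smul]
  match_scalars <;> field_simp <;> ring

theorem gaussSeidel_mul_inv_mul_conjTranspose_le {Ω L U : Matrix n n 𝕜} (hΩ : Ω.IsHermitian)
    (hΩu : IsUnit Ω) (hL : IsUnit L) (hLU : L + U = Ω) {s : ℝ} (hs : 0 ≤ s)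
    (h : U * Ω⁻¹ * Uᴴ ≤ s • (Ω - U - Uᴴ)) :
    (-(L⁻¹ * U)) * Ω⁻¹ * (-(L⁻¹ * U))ᴴ ≤ (s / (1 + s)) • Ω⁻¹ := by
  set M := U * Ω⁻¹ * Uᴴ
  have hΩdet : IsUnit Ω.det := (isUnit_iff_isUnit_det Ω).mp hΩu
  have hLdet : IsUnit L.det := (isUnit_iff_isUnit_det L).mp hL
  have hLΩL : L * Ω⁻¹ * Lᴴ = (Ω - U - Uᴴ) + M := by
    rw [eq_sub_of_add_eq hLU, conjTranspose_sub, hΩ.eq]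
    simp only [sub_mul, mul_sub, mul_nonsing_inv Ω hΩdet, one_mul, Matrix.mul_assoc,
      nonsing_inv_mul Ω hΩdet, mul_one, M]
    abel
  have hΩinv : L⁻¹ * (L * Ω⁻¹ * Lᴴ) * L⁻¹ᴴ = Ω⁻¹ := by
    rw [conjTranspose_nonsing_inv, Matrix.mul_assoc, Matrix.mul_assoc,
      mul_nonsing_inv _ (by simpa using hLdet.star), mul_one, ← Matrix.mul_assoc,
      nonsing_inv_mul L hLdet, one_mul]
  have hM : M ≤ (s / (1 + s)) • (L * Ω⁻¹ * Lᴴ) := by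
    have h1s : 0 < 1 + s := by linarith
    have : (1 + s) • M ≤ s • (L * Ω⁻¹ * Lᴴ) := by
      rwa [← sub_nonneg, show s • (L * Ω⁻¹ * Lᴴ) - (1 + s) • M = s • (Ω - U - Uᴴ) - M by
        rw [hLΩL]; module, sub_nonneg]
    calc M = (1 + s)⁻¹ • ((1 + s) • M) := by rw [smul_smul, inv_mul_cancel₀ h1s.ne', one_smul]
      _ ≤ (1 + s)⁻¹ • (s • (L * Ω⁻¹ * Lᴴ)) := smul_le_smul_of_nonneg_left this (by positivity)
      _ = _ := by rw [smul_smul, inv_mul_eq_div]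
  calc (-(L⁻¹ * U)) * Ω⁻¹ * (-(L⁻¹ * U))ᴴ = L⁻¹ * M * L⁻¹ᴴ := by
        simp only [conjTranspose_neg, conjTranspose_mul, neg_mul, mul_neg, neg_neg,
          Matrix.mul_assoc, M]
    _ ≤ L⁻¹ * ((s / (1 + s)) • (L * Ω⁻¹ * Lᴴ)) * L⁻¹ᴴ := by
      simpa only [star_eq_conjTranspose] using star_right_conjugate_le_conjugate hM L⁻¹
    _ = (s / (1 + s)) • Ω⁻¹ := by rw [mul_smul_comm, smul_mul_assoc, hΩinv]

end LoewnerOrder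

section Blocks

variable {m q : ℕ} {A B : Matrix (Fin m × Fin q) (Fin m × Fin q) ℝ}

theorem blkDiag_sub (A B : Matrix (Fin m × Fin q) (Fin m × Fin q) ℝ) :
    (A - B).blkDiag = A.blkDiag - B.blkDiag := by
  ext p r; by_cases h : p.1 = r.1 <;> simp [blkDiag, h]

theorem blkDiag_smul (c : ℝ) (A : Matrix (Fin m × Fin q) (Fin m × Fin q) ℝ) :
    (c • A).blkDiag = c • A.blkDiag := by
  ext p r; by_cases h : p.1 = r.1 <;> simp [blkDiag, h]

@[simp]
theorem blkDiag_one : (1 : Matrix (Fin m × Fin q) (Fin m × Fin q) ℝ).blkDiag = 1 := by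
  ext p r; by_cases h : p.1 = r.1 <;> simp +contextual [blkDiag, one_apply, h, Prod.ext_iff]

theorem PosSemidef.blkDiag (hA : A.PosSemidef) : A.blkDiag.PosSemidef := by
  let P : Matrix (Fin m × Fin q) (Fin m) ℝ := of fun p i => if p.1 = i then 1 else 0
  have hP : A.blkDiag = A ⊙ (P * Pᴴ) := by
    ext p r; by_cases h : p.1 = r.1 <;> simp [Matrix.blkDiag, P, h, mul_apply, eq_comm]
  rw [hP]
  exact hA.hadamard (posSemidef_self_mul_conjTranspose P)

theorem blkDiag_mono (h : A ≤ B) : A.blkDiag ≤ B.blkDiag := by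
  rw [le_iff, ← blkDiag_sub]
  exact (le_iff.mp h).blkDiag

theorem blkLower_add_blkDiag_add_blkUpper_s8 (A : Matrix (Fin m × Fin q) (Fin m × Fin q) ℝ) :
    A.blkLower + A.blkDiag + A.blkUpper = A := by
  ext p r
  simp only [blkLower, blkDiag, blkUpper, add_apply, of_apply]
  split_ifs <;> grind

theorem transpose_blkUpper (hA : Aᵀ = A) : A.blkUpperᵀ = A.blkLower := by
  ext p r
  simp [blkUpper, blkLower, ← congrFun (congrFun hA p) r]

theorem sub_blkUpper_sub_transpose_blkUpper (hA : Aᵀ = A) :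
    A - A.blkUpper - A.blkUpperᵀ = A.blkDiag := by
  rw [transpose_blkUpper hA]
  nth_rw 1 [← blkLower_add_blkDiag_add_blkUpper_s8 A]
  abel

theorem blkDiag_mul (A B : Matrix (Fin m × Fin q) (Fin m × Fin q) ℝ) :
    (A * B).blkDiag = (A.blkLower * B.blkUpper).blkDiag + A.blkDiag * B.blkDiag +
      (A.blkUpper * B.blkLower).blkDiag := by
  ext p r
  simp only [blkDiag, blkLower, blkUpper, of_apply, add_apply, mul_apply]
  split_ifs with h
  · rw [← Finset.sum_add_distrib, ← Finset.sum_add_distrib]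
    refine Finset.sum_congr rfl fun k _ => ?_
    split_ifs <;> grind
  · rw [zero_add, add_zero]
    refine (Finset.sum_eq_zero fun k _ => ?_).symm
    split_ifs <;> grind

theorem blkDiag_blkUpper_mul_blkLower
    (htri : ∀ p r : Fin m × Fin q, 1 < |(p.1 : ℤ) - (r.1 : ℤ)| → A p r = 0) :
    (A.blkUpper * A.blkLower).blkDiag = A.blkUpper * A.blkLower := by
  ext p r
  simp only [blkDiag, of_apply]
  split_ifs with h
  · rfl
  refine (Finset.sum_eq_zero fun k _ => ?_).symm
  simp only [blkUpper, blkLower, of_apply]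
  split_ifs with hpk hrk
  · have hpr : (p.1 : ℕ) ≠ r.1 := fun e => h (Fin.ext e)
    have hpk' := Fin.lt_def.mp hpk
    have hrk' := Fin.lt_def.mp hrk
    rcases lt_or_gt_of_ne hpr with hlt | hlt
    · rw [htri p k (by rw [lt_abs]; omega), zero_mul]
    · rw [htri k r (by rw [lt_abs]; omega), mul_zero]
  all_goals simp

theorem blkUpper_mul_blkLower_le (hsym : Aᵀ = A)
    (htri : ∀ p r : Fin m × Fin q, 1 < |(p.1 : ℤ) - (r.1 : ℤ)| → A p r = 0) {a b : ℝ}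
    (ha : a • 1 ≤ A) (hb : A ≤ b • 1) :
    A.blkUpper * A.blkLower ≤ (a + b) • A.blkDiag - (a * b) • 1 - A.blkDiag * A.blkDiag := by
  have hsplit := blkDiag_mul A A
  rw [blkDiag_blkUpper_mul_blkLower htri] at hsplit
  have hLU : 0 ≤ (A.blkLower * A.blkUpper).blkDiag := by
    rw [← transpose_blkUpper hsym, ← conjTranspose_eq_transpose_of_trivial]
    exact (posSemidef_conjTranspose_mul_self _).blkDiag.nonneg
  have hsq : (A * A).blkDiag ≤ (a + b) • A.blkDiag - (a * b) • 1 := by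
    simpa only [blkDiag_sub, blkDiag_smul, blkDiag_one] using
      blkDiag_mono (mul_self_le_of_smul_one_le_of_le_smul_one ha hb)
  calc A.blkUpper * A.blkLower
      = (A * A).blkDiag - (A.blkLower * A.blkUpper).blkDiag - A.blkDiag * A.blkDiag := by
        rw [hsplit]; abel
    _ ≤ (A * A).blkDiag - A.blkDiag * A.blkDiag := sub_le_sub_right (sub_le_self _ hLU) _
    _ ≤ _ := sub_le_sub_right hsq _

theorem blkUpper_mul_inv_mul_transpose_blkUpper_le
    (htri : ∀ p r : Fin m × Fin q, 1 < |(p.1 : ℤ) - (r.1 : ℤ)| → A p r = 0) {a b : ℝ}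
    (ha₀ : 0 < a) (hb₀ : 0 < b) (ha : a • 1 ≤ A) (hb : A ≤ b • 1) :
    A.blkUpper * A⁻¹ * A.blkUpperᵀ ≤ ((b - a) ^ 2 / (a * b)) • A.blkDiag := by
  have hsym : Aᵀ = A := by
    simpa [conjTranspose_eq_transpose_of_trivial] using (posDef_of_smul_one_le ha₀ ha).1.eq
  have hDa : a • 1 ≤ A.blkDiag := by simpa [blkDiag_smul] using blkDiag_mono ha
  have hDb : A.blkDiag ≤ b • 1 := by simpa [blkDiag_smul] using blkDiag_mono hb
  calc A.blkUpper * A⁻¹ * A.blkUpperᵀ ≤ A.blkUpper * (a⁻¹ • 1) * A.blkUpperᵀ := by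
        simpa only [star_eq_conjTranspose, conjTranspose_eq_transpose_of_trivial] using
          star_right_conjugate_le_conjugate (inv_le_smul_one_of_smul_one_le ha₀ ha) A.blkUpper
    _ = a⁻¹ • (A.blkUpper * A.blkLower) := by
        rw [transpose_blkUpper hsym, mul_smul_comm, mul_one, smul_mul_assoc]
    _ ≤ a⁻¹ • ((a + b) • A.blkDiag - (a * b) • 1 - A.blkDiag * A.blkDiag) :=
        smul_le_smul_of_nonneg_left (blkUpper_mul_blkLower_le hsym htri ha hb) (by positivity)
    _ ≤ a⁻¹ • (((b - a) ^ 2 / b) • A.blkDiag) :=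
        smul_le_smul_of_nonneg_left
          (add_smul_sub_smul_one_sub_mul_self_le ha₀.le hb₀ hDa hDb) (by positivity)
    _ = ((b - a) ^ 2 / (a * b)) • A.blkDiag := by
        rw [smul_smul]; congr 1; field_simp

end Blocks

end Matrix

theorem gaussSeidel_contraction_of_blockTridiagonal_precision_general
    {m q : ℕ} (Ω : Matrix (Fin m × Fin q) (Fin m × Fin q) ℝ)
    (htri : ∀ p r : Fin m × Fin q, 1 < |(p.1 : ℤ) - (r.1 : ℤ)| → Ω p r = 0)
    (lmin lmax : ℝ) (hlmin : 0 < lmin)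
    (hmin : (Ω - lmin • (1 : Matrix (Fin m × Fin q) (Fin m × Fin q) ℝ)).PosSemidef)
    (hmax : ((lmax • (1 : Matrix (Fin m × Fin q) (Fin m × Fin q) ℝ)) - Ω).PosSemidef)
    (hInv : IsUnit (Ω.blkLower + Ω.blkDiag)) :
    ((((lmax / lmin) * (1 - (lmax / lmin)⁻¹) ^ 2) /
          (1 + (lmax / lmin) * (1 - (lmax / lmin)⁻¹) ^ 2)) • Ω⁻¹ -
        (-((Ω.blkLower + Ω.blkDiag)⁻¹ * Ω.blkUpper)) * Ω⁻¹ *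
          (-((Ω.blkLower + Ω.blkDiag)⁻¹ * Ω.blkUpper))ᵀ).PosSemidef := by
  rcases isEmpty_or_nonempty (Fin m × Fin q) with _ | _
  · convert PosSemidef.zero
    exact Subsingleton.elim _ _
  have hmin : lmin • 1 ≤ Ω := hmin
  have hmax : Ω ≤ lmax • 1 := hmax
  have hΩ := posDef_of_smul_one_le hlmin hmin
  have hlmax : 0 < lmax := hlmin.trans_le (le_of_smul_one_le_smul_one (hmin.trans hmax))
  have hs : (lmax / lmin) * (1 - (lmax / lmin)⁻¹) ^ 2 = (lmax - lmin) ^ 2 / (lmin * lmax) := by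
    field_simp
  have hsym : Ωᵀ = Ω := by simpa [conjTranspose_eq_transpose_of_trivial] using hΩ.1.eq
  have key := blkUpper_mul_inv_mul_transpose_blkUpper_le htri hlmin hlmax hmin hmax
  rw [← sub_blkUpper_sub_transpose_blkUpper hsym, ← conjTranspose_eq_transpose_of_trivial] at key
  rw [hs, ← conjTranspose_eq_transpose_of_trivial]
  exact gaussSeidel_mul_inv_mul_conjTranspose_le hΩ.1 hΩ.isUnit hInv
    (blkLower_add_blkDiag_add_blkUpper_s8 Ω) (by positivity) key

/-- if `Ω` is symmetric positive definite and `q`-block-tridiagonal with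
extreme eigenvalues `λ_min ≤ λ_max` (Loewner order) and condition number `𝒞 = λ_max/λ_min`,
then the Gauss–Seidel operator `G = -(Ω_L + Ω_D)⁻¹ Ω_U` and `C = Ω⁻¹` satisfy
`G C Gᵀ ⪯ β C` with `β = 𝒞(1 - 𝒞⁻¹)² / (1 + 𝒞(1 - 𝒞⁻¹)²)`. -/
theorem gaussSeidel_contraction_of_blockTridiagonal_precision
    {m q : ℕ} (Ω : Matrix (Fin m × Fin q) (Fin m × Fin q) ℝ) (hΩ : Ω.PosDef)
    (htri : ∀ p r : Fin m × Fin q, 1 < |(p.1 : ℤ) - (r.1 : ℤ)| → Ω p r = 0)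
    (lmin lmax : ℝ) (hlmin : 0 < lmin)
    (hmin : (Ω - lmin • (1 : Matrix (Fin m × Fin q) (Fin m × Fin q) ℝ)).PosSemidef)
    (hmax : ((lmax • (1 : Matrix (Fin m × Fin q) (Fin m × Fin q) ℝ)) - Ω).PosSemidef)
    (hInv : IsUnit (Ω.blkLower + Ω.blkDiag)) :
    ((((lmax / lmin) * (1 - (lmax / lmin)⁻¹) ^ 2) /
          (1 + (lmax / lmin) * (1 - (lmax / lmin)⁻¹) ^ 2)) • Ω⁻¹ -
        (-((Ω.blkLower + Ω.blkDiag)⁻¹ * Ω.blkUpper)) * Ω⁻¹ *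
          (-((Ω.blkLower + Ω.blkDiag)⁻¹ * Ω.blkUpper))ᵀ).PosSemidef :=
  gaussSeidel_contraction_of_blockTridiagonal_precision_general Ω htri lmin lmax hlmin hmin hmax
    hInv
end

section
/- Let C be a real symmetric positive definite matrix partitioned into q×q blocks, block-tridiagonal, and let Ω = C⁻¹ with block strictly-upper-triangular part Ω_U. Then the matrix CΩ_U is block-upper-triangular, and its only possibly nonzero blocks are (CΩ_U)_{i,i} and (CΩ_U)_{i,i+1}; moreover (CΩ_U)_{i,i} = C_{i,i−1}Ω_{i−1,i} and (CΩ_U)_{i,i+1} = −C_{i,i+1}Ω_{i+1,i+1}. -/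
open Matrix

/-- The `(i, j)`-th `q × q` block of a matrix indexed by `Fin m × Fin q`. -/
def Matrix.blk {m q : ℕ} (A : Matrix (Fin m × Fin q) (Fin m × Fin q) ℝ) (i j : Fin m) :
    Matrix (Fin q) (Fin q) ℝ :=
  Matrix.of fun a b => A (i, a) (j, b)

/-- for a symmetric positive definite `q`-block-tridiagonal `C` with `Ω = C⁻¹`
and `Ω_U` the block strictly-upper part of `Ω`, the matrix `C Ω_U` is block-upper-triangular,
its blocks `(CΩ_U)_{i,j}` vanish for `j > i + 1`, and
`(CΩ_U)_{i,i} = C_{i,i-1} Ω_{i-1,i}` (for `i ≥ 1`) and `(CΩ_U)_{i,i+1} = -C_{i,i+1} Ω_{i+1,i+1}`. -/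
theorem blocks_of_C_mul_blockUpper
    {m q : ℕ} (C : Matrix (Fin m × Fin q) (Fin m × Fin q) ℝ) (hC : C.PosDef)
    (htri : ∀ p r : Fin m × Fin q, 1 < |(p.1 : ℤ) - (r.1 : ℤ)| → C p r = 0) :
    (∀ p r : Fin m × Fin q, r.1 < p.1 → (C * C⁻¹.blkUpper) p r = 0) ∧
    (∀ p r : Fin m × Fin q, (p.1 : ℕ) + 1 < (r.1 : ℕ) → (C * C⁻¹.blkUpper) p r = 0) ∧
    (∀ i j : Fin m, (j : ℕ) = (i : ℕ) + 1 →
      (C * C⁻¹.blkUpper).blk j j = C.blk j i * C⁻¹.blk i j ∧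
      (C * C⁻¹.blkUpper).blk i j = -(C.blk i j * C⁻¹.blk j j)) := by
  have hdet : IsUnit C.det := isUnit_iff_ne_zero.mpr (ne_of_gt hC.det_pos)
  have hinv : C * C⁻¹ = 1 := Matrix.mul_nonsing_inv C hdet
  have htri' : ∀ p r : Fin m × Fin q, ((p.1 : ℕ) + 1 < (r.1 : ℕ) ∨ (r.1 : ℕ) + 1 < (p.1 : ℕ)) →
      C p r = 0 := by
    intro p r h
    apply htri
    rcases h with h | h
    · rw [abs_sub_comm, abs_of_pos (by omega)]; omega
    · rw [abs_of_pos (by omega)]; omega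
  refine ⟨?_, ?_, ?_⟩
  · intro p r hr
    rw [Matrix.mul_apply]
    apply Finset.sum_eq_zero
    intro s _
    by_cases h : s.1 < r.1
    · have hc : C p s = 0 := htri' p s (Or.inr (by
        have h1 : (s.1 : ℕ) < (r.1 : ℕ) := h
        have h2 : (r.1 : ℕ) < (p.1 : ℕ) := hr
        omega))
      simp [hc]
    · simp [Matrix.blkUpper, h]
  · intro p r hr
    rw [Matrix.mul_apply]
    have key : ∀ s, C p s * C⁻¹.blkUpper s r = C p s * C⁻¹ s r := by
      intro s
      by_cases h : s.1 < r.1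
      · simp [Matrix.blkUpper, h]
      · have hc : C p s = 0 := htri' p s (Or.inl (by
          have h1 : (r.1 : ℕ) ≤ (s.1 : ℕ) := not_lt.mp h
          omega))
        simp [hc]
    simp_rw [key]
    have h1 := congrFun (congrFun hinv p) r
    rw [Matrix.mul_apply] at h1
    rw [h1, Matrix.one_apply_ne]
    intro hpr
    rw [hpr] at hr
    omega
  · intro i j hj
    have hij : (i : ℕ) < (j : ℕ) := by omega
    constructor
    · ext a b
      simp only [Matrix.blk, Matrix.of_apply, Matrix.mul_apply]
      rw [Fintype.sum_prod_type]
      rw [Finset.sum_eq_single i]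
      · apply Finset.sum_congr rfl
        intro c _
        simp [Matrix.blkUpper, show i < j from hij]
      · intro s1 _ hs1
        apply Finset.sum_eq_zero
        intro s2 _
        by_cases h : s1 < j
        · have hc : C (j, a) (s1, s2) = 0 := htri' _ _ (Or.inr (by
            simp only
            have h1 : (s1 : ℕ) < (j : ℕ) := h
            have h2 : (s1 : ℕ) ≠ (i : ℕ) := fun he => hs1 (Fin.ext he)
            omega))
          simp [hc]
        · simp [Matrix.blkUpper, h]
      · intro h
        exact absurd (Finset.mem_univ i) h
    · ext a b
      simp only [Matrix.blk, Matrix.of_apply, Matrix.mul_apply, Matrix.neg_apply]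
      have split : ∀ s : Fin m × Fin q,
          C (i, a) s * C⁻¹.blkUpper s (j, b)
            = C (i, a) s * C⁻¹ s (j, b)
              - C (i, a) s * (if s.1 = j then C⁻¹ s (j, b) else 0) := by
        intro s
        rcases lt_trichotomy (s.1 : ℕ) (j : ℕ) with h | h | h
        · have h' : s.1 < j := h
          have hne : ¬ s.1 = j := fun he => by rw [he] at h; omega
          simp [Matrix.blkUpper, h', hne]
        · have heq : s.1 = j := Fin.ext h
          have h' : ¬ s.1 < j := by rw [heq]; exact lt_irrefl _
          simp [Matrix.blkUpper, h', heq]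
        · have hc : C (i, a) s = 0 := htri' _ _ (Or.inl (by simp only; omega))
          simp [hc]
      simp_rw [split]
      rw [Finset.sum_sub_distrib]
      have h1 := congrFun (congrFun hinv (i, a)) (j, b)
      rw [Matrix.mul_apply] at h1
      rw [h1, Matrix.one_apply_ne (by
        intro hpr
        have := congrArg Prod.fst hpr
        simp only at this
        rw [this] at hij
        omega)]
      rw [zero_sub]
      congr 1
      rw [Fintype.sum_prod_type]
      rw [Finset.sum_eq_single j]
      · apply Finset.sum_congr rfl
        intro c _
        rw [if_pos rfl]
      · intro s1 _ hs1
        apply Finset.sum_eq_zero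
        intro s2 _
        simp [hs1]
      · intro h
        exact absurd (Finset.mem_univ j) h
end

section
/- Let Ω = Ω_L + Ω_D + Ω_U be the block decomposition of a symmetric positive definite matrix and suppose there exists γ > 0 such that G C Gᵀ ⪯ γ·(Ω_L+Ω_D)⁻¹Ω_D(Ω_L+Ω_D)⁻ᵀ, where C = Ω⁻¹ and G = −(Ω_L+Ω_D)⁻¹Ω_U. Then G C Gᵀ ⪯ (γ/(1+γ))·C. -/
open Matrix

namespace Matrix

variable {m q : ℕ} (Ω : Matrix (Fin m × Fin q) (Fin m × Fin q) ℝ)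

theorem blkUpper_eq_sub : Ω.blkUpper = Ω - (Ω.blkLower + Ω.blkDiag) :=
  eq_sub_of_add_eq' (blkLower_add_blkDiag_add_blkUpper Ω)

variable {Ω}

theorem blkLower_add_blkDiag_add_transpose_sub (hΩ : Ωᵀ = Ω) :
    Ω.blkLower + Ω.blkDiag + (Ω.blkLower + Ω.blkDiag)ᵀ - Ω = Ω.blkDiag := by
  rw [transpose_add, transpose_blkLower, transpose_blkDiag, hΩ, blkUpper_eq_sub]
  abel

end Matrix

theorem Matrix.nonsing_inv_eq_splitting_iteration_add {n R : Type*} [Fintype n] [DecidableEq n]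
    [CommRing R] {Ω M : Matrix n n R} (hΩ : IsUnit Ω.det) (hΩT : Ωᵀ = Ω) (hM : IsUnit M.det) :
    Ω⁻¹ = -(M⁻¹ * (Ω - M)) * Ω⁻¹ * (-(M⁻¹ * (Ω - M)))ᵀ + M⁻¹ * (M + Mᵀ - Ω) * M⁻¹ᵀ := by
  have hG : -(M⁻¹ * (Ω - M)) = 1 - M⁻¹ * Ω := by
    rw [mul_sub, nonsing_inv_mul M hM]; abel
  have hMT : Mᵀ * M⁻¹ᵀ = 1 := by
    rw [transpose_nonsing_inv]; exact mul_nonsing_inv _ (isUnit_det_transpose M hM)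
  set C := Ω⁻¹
  set B := M⁻¹ᵀ
  rw [hG, transpose_sub, transpose_mul, hΩT, transpose_one]
  symm
  calc (1 - M⁻¹ * Ω) * C * (1 - Ω * B) + M⁻¹ * (M + Mᵀ - Ω) * B
      = C - M⁻¹ * (Ω * C) - (C * Ω) * B + M⁻¹ * (Ω * C) * Ω * B
          + (M⁻¹ * M) * B + M⁻¹ * (Mᵀ * B) - M⁻¹ * Ω * B := by noncomm_ring
    _ = C := by
      rw [mul_nonsing_inv Ω hΩ, nonsing_inv_mul Ω hΩ, nonsing_inv_mul M hM, hMT]; noncomm_ring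

theorem Matrix.PosSemidef.div_one_add_smul_sub {n : Type*} [Fintype n] {C B N : Matrix n n ℝ}
    (hC : C = B + N) {γ : ℝ} (hγ : -1 < γ) (h : (γ • N - B).PosSemidef) :
    ((γ / (1 + γ)) • C - B).PosSemidef := by
  have hγ' : 0 < 1 + γ := by linarith
  have hscale : (γ / (1 + γ)) • C - B = (1 + γ)⁻¹ • (γ • N - B) := by
    rw [hC]
    match_scalars <;> field_simp; ring
  rw [hscale]
  exact h.smul (inv_nonneg.mpr hγ'.le)

/-- if `Ω = Ω_L + Ω_D + Ω_U` is the block decomposition of a symmetric positive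
definite matrix, `C = Ω⁻¹`, `G = -(Ω_L+Ω_D)⁻¹ Ω_U`, and there is `γ > 0` with
`G C Gᵀ ⪯ γ (Ω_L+Ω_D)⁻¹ Ω_D (Ω_L+Ω_D)⁻ᵀ`, then `G C Gᵀ ⪯ (γ/(1+γ)) C`. -/
theorem gaussSeidel_contraction_of_noise_bound
    {m q : ℕ} (Ω : Matrix (Fin m × Fin q) (Fin m × Fin q) ℝ) (hΩ : Ω.PosDef)
    (hInv : IsUnit (Ω.blkLower + Ω.blkDiag)) (γ : ℝ) (hγ : 0 < γ)
    (hbound :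
      (γ • ((Ω.blkLower + Ω.blkDiag)⁻¹ * Ω.blkDiag * ((Ω.blkLower + Ω.blkDiag)⁻¹)ᵀ) -
        (-((Ω.blkLower + Ω.blkDiag)⁻¹ * Ω.blkUpper)) * Ω⁻¹ *
          (-((Ω.blkLower + Ω.blkDiag)⁻¹ * Ω.blkUpper))ᵀ).PosSemidef) :
    ((γ / (1 + γ)) • Ω⁻¹ -
        (-((Ω.blkLower + Ω.blkDiag)⁻¹ * Ω.blkUpper)) * Ω⁻¹ *
          (-((Ω.blkLower + Ω.blkDiag)⁻¹ * Ω.blkUpper))ᵀ).PosSemidef := by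
  have hΩT : Ωᵀ = Ω := by
    simpa only [IsHermitian, conjTranspose_eq_transpose_of_trivial] using hΩ.isHermitian
  have hC := nonsing_inv_eq_splitting_iteration_add
    ((isUnit_iff_isUnit_det Ω).mp hΩ.isUnit) hΩT ((isUnit_iff_isUnit_det _).mp hInv)
  rw [blkLower_add_blkDiag_add_transpose_sub hΩT, ← blkUpper_eq_sub] at hC
  exact hbound.div_one_add_smul_sub hC (by linarith)
end

section
/- Suppose a sequence of random vectors satisfies Δ^{k+1} = G Δ^k where Δ^0 ∼ N(Δ_0, C) for a fixed vector Δ_0, C is symmetric positive definite, and G is a matrix with C^{-1/2} G^k C (Gᵀ)^k C^{-1/2} ⪯ β^k I for some β ∈ (0,1). Then E‖C^{-1/2}Δ^k‖² ≤ β^k · n · (1 + ‖C^{-1/2}Δ_0‖²), where n is the dimension. -/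
/-!
Write `R = C^{1/2}` and `A = R⁻¹ Gᵏ R`, so that `A Aᵀ = R⁻¹ Gᵏ C (Gᵀ)ᵏ R⁻¹` is the covariance
term and `R⁻¹ Gᵏ Δ₀ = A (R⁻¹ Δ₀)` is the mean term. Row-wise Cauchy–Schwarz bounds the mean term
by `tr(A Aᵀ) ‖R⁻¹ Δ₀‖²` (this is `Δ₀ Δ₀ᵀ ⪯ ‖R⁻¹ Δ₀‖² C` in disguise), and `A Aᵀ ⪯ βᵏ I` gives
`tr(A Aᵀ) ≤ βᵏ n`.
-/

open Matrix

section PosSemidefSqrt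

open scoped ComplexOrder

/-- Mathlib's definition of December 2024, since removed from the library. -/
noncomputable def Matrix.PosSemidef.sqrt {n 𝕜 : Type*} [Fintype n] [DecidableEq n] [RCLike 𝕜]
    {A : Matrix n n 𝕜} (hA : A.PosSemidef) : Matrix n n 𝕜 :=
  hA.1.eigenvectorUnitary.1 * diagonal ((↑) ∘ (√·) ∘ hA.1.eigenvalues) *
  (star hA.1.eigenvectorUnitary : Matrix n n 𝕜)

end PosSemidefSqrt

namespace Matrix

section Sqrt

open scoped ComplexOrder

variable {n 𝕜 : Type*} [Fintype n] [DecidableEq n] [RCLike 𝕜] {A : Matrix n n 𝕜}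

theorem PosSemidef.sqrt_mul_self (hA : A.PosSemidef) : hA.sqrt * hA.sqrt = A := by
  set U : Matrix n n 𝕜 := hA.1.eigenvectorUnitary.1
  have hU : star U * U = 1 := Unitary.coe_star_mul_self _
  conv_rhs => rw [hA.1.spectral_theorem, Unitary.conjStarAlgAut_apply]
  rw [PosSemidef.sqrt, Matrix.mul_assoc, Matrix.mul_assoc, ← Matrix.mul_assoc (star U),
    ← Matrix.mul_assoc (star U), hU, Matrix.one_mul, ← Matrix.mul_assoc (diagonal _),
    diagonal_mul_diagonal, ← Matrix.mul_assoc]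
  congr 3
  funext i
  simp [← RCLike.ofReal_mul, Real.mul_self_sqrt (hA.eigenvalues_nonneg i)]

theorem PosSemidef.isHermitian_sqrt (hA : A.PosSemidef) : hA.sqrt.IsHermitian := by
  have hreal : star (((↑) : ℝ → 𝕜) ∘ (√·) ∘ hA.1.eigenvalues) = (↑) ∘ (√·) ∘ hA.1.eigenvalues :=
    funext fun _ => RCLike.conj_ofReal _
  simp [IsHermitian, PosSemidef.sqrt, conjTranspose_mul, star_eq_conjTranspose, Matrix.mul_assoc,
    hreal]

theorem PosDef.isUnit_det_sqrt (hA : A.PosDef) : IsUnit hA.posSemidef.sqrt.det := by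
  have h : IsUnit (hA.posSemidef.sqrt * hA.posSemidef.sqrt).det := by
    rw [hA.posSemidef.sqrt_mul_self]
    exact (isUnit_iff_isUnit_det A).mp hA.isUnit
  rw [det_mul] at h
  exact isUnit_of_mul_isUnit_left h

end Sqrt

theorem trace_le_of_posSemidef_smul_one_sub {n R : Type*} [Fintype n] [DecidableEq n]
    [CommRing R] [PartialOrder R] [IsOrderedRing R] [StarRing R] {M : Matrix n n R} {c : R}
    (h : (c • (1 : Matrix n n R) - M).PosSemidef) : M.trace ≤ c * Fintype.card n := by
  have := h.trace_nonneg
  rwa [trace_sub, trace_smul, trace_one, sub_nonneg, smul_eq_mul] at this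

theorem sum_mulVec_sq_le_trace_mul_transpose_mul {m n R : Type*} [Fintype m] [Fintype n]
    [CommRing R] [LinearOrder R] [IsStrictOrderedRing R] (A : Matrix m n R) (x : n → R) :
    ∑ i, (A *ᵥ x) i ^ 2 ≤ (A * Aᵀ).trace * ∑ j, x j ^ 2 := by
  calc ∑ i, (A *ᵥ x) i ^ 2 ≤ ∑ i, (∑ j, A i j ^ 2) * ∑ j, x j ^ 2 :=
        Finset.sum_le_sum fun i _ => Finset.sum_mul_sq_le_sq_mul_sq _ _ _
    _ = (A * Aᵀ).trace * ∑ j, x j ^ 2 := by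
        simp [← Finset.sum_mul, trace, mul_apply, sq]

theorem conj_mul_transpose_conj {n R : Type*} [Fintype n] [DecidableEq n] [CommRing R]
    {P : Matrix n n R} (hP : Pᵀ = P) (B : Matrix n n R) :
    (P⁻¹ * B * P) * (P⁻¹ * B * P)ᵀ = P⁻¹ * B * (P * P) * Bᵀ * P⁻¹ := by
  simp only [transpose_mul, transpose_nonsing_inv, hP, Matrix.mul_assoc]

end Matrix

/-- Since `Δᵏ = Gᵏ Δ⁰ ∼ N(Gᵏ Δ₀, Gᵏ C (Gᵀ)ᵏ)`, the expectation `E‖C^{-1/2} Δᵏ‖²` is written out as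
`‖C^{-1/2} Gᵏ Δ₀‖² + tr(C^{-1/2} Gᵏ C (Gᵀ)ᵏ C^{-1/2})`. -/
theorem gaussian_iteration_error_bound_general
    {n : ℕ} (C G : Matrix (Fin n) (Fin n) ℝ) (hC : C.PosDef)
    (Δ₀ : Fin n → ℝ) (β : ℝ)
    (hcontr : ∀ k : ℕ,
      ((β ^ k) • (1 : Matrix (Fin n) (Fin n) ℝ) -
        hC.posSemidef.sqrt⁻¹ * G ^ k * C * (Gᵀ) ^ k * hC.posSemidef.sqrt⁻¹).PosSemidef)
    (k : ℕ) :
    (∑ i : Fin n, (hC.posSemidef.sqrt⁻¹ *ᵥ (G ^ k *ᵥ Δ₀)) i ^ 2) +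
        (hC.posSemidef.sqrt⁻¹ * G ^ k * C * (Gᵀ) ^ k * hC.posSemidef.sqrt⁻¹).trace ≤
      β ^ k * n * (1 + ∑ i : Fin n, (hC.posSemidef.sqrt⁻¹ *ᵥ Δ₀) i ^ 2) := by
  set R := hC.posSemidef.sqrt
  set A := R⁻¹ * G ^ k * R
  have hRsymm : Rᵀ = R := by
    simpa [conjTranspose_eq_transpose_of_trivial] using hC.posSemidef.isHermitian_sqrt.eq
  have hcov : A * Aᵀ = R⁻¹ * G ^ k * C * (Gᵀ) ^ k * R⁻¹ := by
    rw [conj_mul_transpose_conj hRsymm, hC.posSemidef.sqrt_mul_self, transpose_pow]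
  have hmean : A *ᵥ (R⁻¹ *ᵥ Δ₀) = R⁻¹ *ᵥ (G ^ k *ᵥ Δ₀) := by
    rw [mulVec_mulVec, Matrix.mul_assoc _ R, mul_nonsing_inv R hC.isUnit_det_sqrt,
      Matrix.mul_one, mulVec_mulVec]
  have htrace : (A * Aᵀ).trace ≤ β ^ k * n := by
    simpa [hcov] using trace_le_of_posSemidef_smul_one_sub (hcontr k)
  rw [← hmean, ← hcov]
  calc ∑ i, (A *ᵥ (R⁻¹ *ᵥ Δ₀)) i ^ 2 + (A * Aᵀ).trace
      ≤ (A * Aᵀ).trace * ∑ i, (R⁻¹ *ᵥ Δ₀) i ^ 2 + (A * Aᵀ).trace := by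
        gcongr
        exact sum_mulVec_sq_le_trace_mul_transpose_mul A _
    _ = (A * Aᵀ).trace * (1 + ∑ i, (R⁻¹ *ᵥ Δ₀) i ^ 2) := by ring
    _ ≤ β ^ k * n * (1 + ∑ i, (R⁻¹ *ᵥ Δ₀) i ^ 2) := by gcongr

/-- if `Δ^{k} = G^k Δ^0` with `Δ^0 ∼ N(Δ_0, C)`, `C` symmetric positive definite,
and `C^{-1/2} G^k C (Gᵀ)^k C^{-1/2} ⪯ β^k I` for some `β ∈ (0,1)`, then
`E‖C^{-1/2} Δ^k‖² ≤ β^k n (1 + ‖C^{-1/2} Δ_0‖²)`.  Here the expectation is written out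
explicitly: since `Δ^k` is Gaussian with mean `G^k Δ_0` and covariance `G^k C (Gᵀ)^k`,
`E‖C^{-1/2} Δ^k‖² = ‖C^{-1/2} G^k Δ_0‖² + tr(C^{-1/2} G^k C (Gᵀ)^k C^{-1/2})`, and
`C^{-1/2}` is the inverse of the positive semidefinite square root of `C`. -/
theorem gaussian_iteration_error_bound
    {n : ℕ} (C G : Matrix (Fin n) (Fin n) ℝ) (hC : C.PosDef)
    (Δ₀ : Fin n → ℝ) (β : ℝ) (hβ0 : 0 < β) (hβ1 : β < 1)
    (hcontr : ∀ k : ℕ,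
      ((β ^ k) • (1 : Matrix (Fin n) (Fin n) ℝ) -
        hC.posSemidef.sqrt⁻¹ * G ^ k * C * (Gᵀ) ^ k * hC.posSemidef.sqrt⁻¹).PosSemidef)
    (k : ℕ) :
    (∑ i : Fin n, (hC.posSemidef.sqrt⁻¹ *ᵥ (G ^ k *ᵥ Δ₀)) i ^ 2) +
        (hC.posSemidef.sqrt⁻¹ * G ^ k * C * (Gᵀ) ^ k * hC.posSemidef.sqrt⁻¹).trace ≤
      β ^ k * n * (1 + ∑ i : Fin n, (hC.posSemidef.sqrt⁻¹ *ᵥ Δ₀) i ^ 2) :=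
  gaussian_iteration_error_bound_general C G hC Δ₀ β hcontr k
end

section
/- Let C be an n×n covariance matrix, H a k×n observation matrix, R a k×k symmetric positive definite matrix, and let Ĉ = (C⁻¹ + Hᵀ R⁻¹ H)⁻¹ be the posterior covariance of a linear-Gaussian inverse problem. If C_loc and H_loc are localized versions with ‖C − C_loc‖ ≤ δ_C < ‖C⁻¹‖⁻¹ and ‖H − H_loc‖ ≤ δ_H, with ‖H‖ ≤ 1, and Δ₁ := ‖C⁻¹‖²δ_C/(1 − δ_C‖C⁻¹‖) + (2δ_H + δ_H²)‖R⁻¹‖ < ‖Ĉ‖⁻¹, then ‖Ĉ − Ĉ_loc‖ ≤ ‖Ĉ‖²Δ₁ / (1 − Δ₁‖Ĉ‖), where Ĉ_loc = (C_loc⁻¹ + H_locᵀ R⁻¹ H_loc)⁻¹. -/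
/-!
Both posterior covariances are inverses of precision matrices, `Ĉ = A⁻¹` and
`Ĉ_loc = B⁻¹` with `A = C⁻¹ + Hᵀ R⁻¹ H` and `B = C_loc⁻¹ + H_locᵀ R⁻¹ H_loc`. The resolvent
identity `A⁻¹ - B⁻¹ = A⁻¹ (B - A) B⁻¹`, together with `‖B⁻¹‖ ≤ ‖A⁻¹‖ + ‖A⁻¹ - B⁻¹‖`, gives
`‖A⁻¹ - B⁻¹‖ ≤ ‖A⁻¹‖² ε / (1 - ε ‖A⁻¹‖)` whenever `‖A - B‖ ≤ ε < ‖A⁻¹‖⁻¹`. Applied to `C`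
and `C_loc` this bounds the prior part of `A - B`; writing
`Hᵀ M H - Gᵀ M G = Hᵀ M (H - G) + (H - G)ᵀ M G` bounds the observation part, so
`‖A - B‖ ≤ Δ₁`, and the same inequality applied to `A` and `B` concludes.
-/

open Matrix
open scoped Matrix.Norms.L2Operator

section NormedRing

variable {R : Type*} [NormedRing R] [HasSummableGeomSeries R]

/-- As `Ring.inverse` vanishes off the units, `hsmall` makes `a` a unit, and then `b` is one
because it lies in the ball of units around `a`. -/
theorem norm_inverse_sub_inverse_le {a b : R} {ε : ℝ} (hε : ‖a - b‖ ≤ ε)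
    (hsmall : ε < ‖Ring.inverse a‖⁻¹) :
    ‖Ring.inverse a - Ring.inverse b‖ ≤
      ‖Ring.inverse a‖ ^ 2 * ε / (1 - ε * ‖Ring.inverse a‖) := by
  set x := ‖Ring.inverse a‖
  set y := ‖Ring.inverse b‖
  have hε0 : 0 ≤ ε := (norm_nonneg _).trans hε
  have hx : 0 < x := by
    by_contra! hx
    rw [le_antisymm hx (norm_nonneg _), _root_.inv_zero] at hsmall
    linarith
  have ha : IsUnit a := by
    by_contra ha
    simp [x, Ring.inverse_non_unit a ha] at hx
  have hεx : ε * x < 1 := (lt_inv_mul_iff₀' hx).1 (by rwa [mul_one])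
  have hb : IsUnit b := by
    refine (ha.unit.ofNearby b ?_).isUnit
    rw [← Ring.inverse_unit, IsUnit.unit_spec, norm_sub_rev]
    exact hε.trans_lt hsmall
  have hdiff : ‖Ring.inverse a - Ring.inverse b‖ ≤ x * ε * y := by
    rw [Ring.inverse_sub_inverse (iff_of_true ha hb)]
    calc ‖Ring.inverse a * (b - a) * Ring.inverse b‖
        ≤ x * ‖b - a‖ * y := norm_mul₃_le
      _ ≤ x * ε * y := by rw [norm_sub_rev]; gcongr
  have hy : y * (1 - ε * x) ≤ x := by
    have : y ≤ x + ‖Ring.inverse a - Ring.inverse b‖ := by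
      rw [norm_sub_rev]
      exact norm_le_norm_add_norm_sub' _ _
    nlinarith
  rw [le_div_iff₀ (by linarith)]
  calc ‖Ring.inverse a - Ring.inverse b‖ * (1 - ε * x)
      ≤ x * ε * (y * (1 - ε * x)) := by nlinarith
    _ ≤ x * ε * x := by gcongr
    _ = x ^ 2 * ε := by ring

end NormedRing

namespace Matrix

variable {𝕜 : Type*} [RCLike 𝕜]

theorem l2_opNorm_inv_sub_inv_le {m : Type*} [Fintype m] [DecidableEq m]
    {A B : Matrix m m 𝕜} {ε : ℝ} (hε : ‖A - B‖ ≤ ε) (hsmall : ε < ‖A⁻¹‖⁻¹) :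
    ‖A⁻¹ - B⁻¹‖ ≤ ‖A⁻¹‖ ^ 2 * ε / (1 - ε * ‖A⁻¹‖) := by
  simp only [nonsing_inv_eq_ringInverse] at hsmall ⊢
  exact norm_inverse_sub_inverse_le hε hsmall

theorem l2_opNorm_conjTranspose_mul_mul_sub_le {m n : Type*} [Fintype m] [Fintype n]
    [DecidableEq m] [DecidableEq n] (M : Matrix m m 𝕜) {H G : Matrix m n 𝕜} {δ : ℝ}
    (hδ : ‖H - G‖ ≤ δ) :
    ‖Hᴴ * M * H - Gᴴ * M * G‖ ≤ (2 * ‖H‖ * δ + δ ^ 2) * ‖M‖ := by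
  have hδ0 : 0 ≤ δ := (norm_nonneg _).trans hδ
  have hG : ‖G‖ ≤ ‖H‖ + δ := by
    simpa using (norm_le_norm_add_norm_sub' G H).trans (by rw [norm_sub_rev]; gcongr)
  have hsplit : Hᴴ * M * H - Gᴴ * M * G = Hᴴ * M * (H - G) + (H - G)ᴴ * (M * G) := by
    simp only [Matrix.mul_sub, conjTranspose_sub, Matrix.sub_mul, Matrix.mul_assoc]
    abel
  rw [hsplit]
  calc ‖Hᴴ * M * (H - G) + (H - G)ᴴ * (M * G)‖
      ≤ ‖Hᴴ‖ * ‖M‖ * ‖H - G‖ + ‖(H - G)ᴴ‖ * (‖M‖ * ‖G‖) := by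
        refine (norm_add_le _ _).trans (add_le_add ?_ ?_)
        · exact (l2_opNorm_mul _ _).trans (by gcongr; exact l2_opNorm_mul _ _)
        · exact (l2_opNorm_mul _ _).trans (by gcongr; exact l2_opNorm_mul _ _)
    _ ≤ ‖H‖ * ‖M‖ * δ + δ * (‖M‖ * (‖H‖ + δ)) := by
        rw [l2_opNorm_conjTranspose, l2_opNorm_conjTranspose]
        gcongr
    _ = (2 * ‖H‖ * δ + δ ^ 2) * ‖M‖ := by ring

end Matrix

theorem posterior_covariance_localization_bound_general
    {n k : ℕ} (C Cloc : Matrix (Fin n) (Fin n) ℝ)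
    (H Hloc : Matrix (Fin k) (Fin n) ℝ) (R : Matrix (Fin k) (Fin k) ℝ)
    (hH : ‖H‖ ≤ 1) (δC δH : ℝ)
    (hδC : ‖C - Cloc‖ ≤ δC) (hδCsmall : δC < ‖C⁻¹‖⁻¹)
    (hδH : ‖H - Hloc‖ ≤ δH)
    (Δ₁ : ℝ)
    (hΔ₁ : Δ₁ = ‖C⁻¹‖ ^ 2 * δC / (1 - δC * ‖C⁻¹‖) + (2 * δH + δH ^ 2) * ‖R⁻¹‖)
    (hΔ₁small : Δ₁ < ‖(C⁻¹ + Hᵀ * R⁻¹ * H)⁻¹‖⁻¹) :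
    ‖(C⁻¹ + Hᵀ * R⁻¹ * H)⁻¹ - (Cloc⁻¹ + Hlocᵀ * R⁻¹ * Hloc)⁻¹‖ ≤
      ‖(C⁻¹ + Hᵀ * R⁻¹ * H)⁻¹‖ ^ 2 * Δ₁ / (1 - Δ₁ * ‖(C⁻¹ + Hᵀ * R⁻¹ * H)⁻¹‖) := by
  have hprior := l2_opNorm_inv_sub_inv_le hδC hδCsmall
  have hobs : ‖Hᵀ * R⁻¹ * H - Hlocᵀ * R⁻¹ * Hloc‖ ≤ (2 * δH + δH ^ 2) * ‖R⁻¹‖ := by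
    have hδH0 : 0 ≤ δH := (norm_nonneg _).trans hδH
    have := l2_opNorm_conjTranspose_mul_mul_sub_le R⁻¹ hδH
    rw [conjTranspose_eq_transpose_of_trivial, conjTranspose_eq_transpose_of_trivial] at this
    exact this.trans (by gcongr; nlinarith)
  have hprec : ‖(C⁻¹ + Hᵀ * R⁻¹ * H) - (Cloc⁻¹ + Hlocᵀ * R⁻¹ * Hloc)‖ ≤ Δ₁ := by
    rw [hΔ₁, add_sub_add_comm]
    exact (norm_add_le _ _).trans (add_le_add hprior hobs)
  exact l2_opNorm_inv_sub_inv_le hprec hΔ₁small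

/-- localization bound for the posterior covariance of a linear–Gaussian
inverse problem, covariance-matrix form.  With `Ĉ = (C⁻¹ + Hᵀ R⁻¹ H)⁻¹`,
`Ĉ_loc = (C_loc⁻¹ + H_locᵀ R⁻¹ H_loc)⁻¹`, `‖C - C_loc‖ ≤ δ_C < ‖C⁻¹‖⁻¹`,
`‖H - H_loc‖ ≤ δ_H`, `‖H‖ ≤ 1`, and
`Δ₁ = ‖C⁻¹‖² δ_C/(1 - δ_C ‖C⁻¹‖) + (2δ_H + δ_H²) ‖R⁻¹‖ < ‖Ĉ‖⁻¹`, one has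
`‖Ĉ - Ĉ_loc‖ ≤ ‖Ĉ‖² Δ₁ / (1 - Δ₁ ‖Ĉ‖)`. -/
theorem posterior_covariance_localization_bound
    {n k : ℕ} (C Cloc : Matrix (Fin n) (Fin n) ℝ) (hC : C.PosDef) (hCloc : Cloc.PosDef)
    (H Hloc : Matrix (Fin k) (Fin n) ℝ) (R : Matrix (Fin k) (Fin k) ℝ) (hR : R.PosDef)
    (hH : ‖H‖ ≤ 1) (δC δH : ℝ)
    (hδC : ‖C - Cloc‖ ≤ δC) (hδCsmall : δC < ‖C⁻¹‖⁻¹)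
    (hδH : ‖H - Hloc‖ ≤ δH)
    (Δ₁ : ℝ)
    (hΔ₁ : Δ₁ = ‖C⁻¹‖ ^ 2 * δC / (1 - δC * ‖C⁻¹‖) + (2 * δH + δH ^ 2) * ‖R⁻¹‖)
    (hΔ₁small : Δ₁ < ‖(C⁻¹ + Hᵀ * R⁻¹ * H)⁻¹‖⁻¹) :
    ‖(C⁻¹ + Hᵀ * R⁻¹ * H)⁻¹ - (Cloc⁻¹ + Hlocᵀ * R⁻¹ * Hloc)⁻¹‖ ≤
      ‖(C⁻¹ + Hᵀ * R⁻¹ * H)⁻¹‖ ^ 2 * Δ₁ / (1 - Δ₁ * ‖(C⁻¹ + Hᵀ * R⁻¹ * H)⁻¹‖) :=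
  posterior_covariance_localization_bound_general C Cloc H Hloc R hH δC δH hδC hδCsmall hδH Δ₁ hΔ₁
    hΔ₁small
end

section
/- Let Ω be an n×n symmetric positive definite prior precision matrix, H a k×n matrix with ‖H‖ ≤ 1, R symmetric positive definite, and Ĉ = (Ω + HᵀR⁻¹H)⁻¹. Suppose Ω_loc and H_loc satisfy ‖Ω − Ω_loc‖ ≤ δ_Ω and ‖H − H_loc‖ ≤ δ_H, and Δ₂ := δ_Ω + (2δ_H + δ_H²)‖R⁻¹‖ < ‖Ĉ‖⁻¹. Then the localized posterior covariance Ĉ_loc = (Ω_loc + H_locᵀR⁻¹H_loc)⁻¹ satisfies ‖Ĉ − Ĉ_loc‖ ≤ ‖Ĉ‖²Δ₂ / (1 − Δ₂‖Ĉ‖). -/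
/-! The two precision matrices differ by at most `Δ₂`: split
`HᵀMH - KᵀMK = HᵀM(H - K) + (H - K)ᵀMK` and use `‖K‖ ≤ ‖H‖ + ‖H - K‖ ≤ 1 + δ_H`.
For inverses, `D = a⁻¹ - b⁻¹ = a⁻¹(b - a)b⁻¹` together with `b⁻¹ = a⁻¹ - D` gives
`‖D‖ ≤ ‖a⁻¹‖ δ (‖a⁻¹‖ + ‖D‖)`, which solves to `‖D‖ ≤ ‖a⁻¹‖² δ / (1 - δ ‖a⁻¹‖)`;
that `b` is invertible at all comes from the openness of the units of a Banach algebra. -/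

open Matrix
open scoped Matrix.Norms.L2Operator Ring

section NormedRing

variable {R : Type*} [NormedRing R]

theorem norm_inverse_sub_inverse_le_of_isUnit_iff {a b : R} {δ : ℝ} (hunit : IsUnit a ↔ IsUnit b)
    (hab : ‖a - b‖ ≤ δ) (hδ : δ * ‖a⁻¹ʳ‖ < 1) :
    ‖a⁻¹ʳ - b⁻¹ʳ‖ ≤ ‖a⁻¹ʳ‖ ^ 2 * δ / (1 - δ * ‖a⁻¹ʳ‖) := by
  have hδ₀ : 0 ≤ δ := (norm_nonneg _).trans hab
  obtain ⟨D, hD⟩ : ∃ D, a⁻¹ʳ - b⁻¹ʳ = D := ⟨_, rfl⟩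
  have hbound : ‖D‖ ≤ ‖a⁻¹ʳ‖ * δ * (‖a⁻¹ʳ‖ + ‖D‖) :=
    calc ‖D‖ = ‖a⁻¹ʳ * (b - a) * (a⁻¹ʳ - D)‖ := by
          rw [← hD, sub_sub_cancel, Ring.inverse_sub_inverse hunit]
      _ ≤ ‖a⁻¹ʳ‖ * ‖b - a‖ * ‖a⁻¹ʳ - D‖ := norm_mul₃_le
      _ ≤ ‖a⁻¹ʳ‖ * δ * (‖a⁻¹ʳ‖ + ‖D‖) := by
          rw [norm_sub_rev b]
          gcongr
          exact norm_sub_le _ _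
  rw [hD, le_div_iff₀ (by linarith)]
  nlinarith

variable [HasSummableGeomSeries R]

theorem norm_inverse_sub_inverse_le_s17 {a b : R} {δ : ℝ} (hab : ‖a - b‖ ≤ δ)
    (hδ : δ < ‖a⁻¹ʳ‖⁻¹) :
    ‖a⁻¹ʳ - b⁻¹ʳ‖ ≤ ‖a⁻¹ʳ‖ ^ 2 * δ / (1 - δ * ‖a⁻¹ʳ‖) := by
  have hinv_pos : 0 < ‖a⁻¹ʳ‖ := inv_pos.mp ((norm_nonneg _).trans hab |>.trans_lt hδ)
  -- `Ring.inverse` is `0` off the units, so the smallness hypothesis forces `a` to be a unit.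
  obtain ⟨u, rfl⟩ : IsUnit a := by
    by_contra ha
    simp [Ring.inverse_non_unit a ha] at hinv_pos
  have hb : IsUnit b := by
    refine (u.ofNearby b ?_).isUnit
    rw [norm_sub_rev, ← Ring.inverse_unit]
    linarith
  refine norm_inverse_sub_inverse_le_of_isUnit_iff (iff_of_true u.isUnit hb) hab ?_
  rwa [← one_div, lt_div_iff₀ hinv_pos] at hδ

end NormedRing

namespace Matrix

variable {l m n : Type*} [Fintype l] [Fintype m] [Fintype n] [DecidableEq m] [DecidableEq n]

theorem l2_opNorm_transpose (A : Matrix m n ℝ) : ‖Aᵀ‖ = ‖A‖ := by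
  simpa only [conjTranspose_eq_transpose_of_trivial] using l2_opNorm_conjTranspose A

theorem l2_opNorm_mul_mul_le {p : Type*} [Fintype p] [DecidableEq p] (A : Matrix l m ℝ)
    (B : Matrix m n ℝ) (C : Matrix n p ℝ) : ‖A * B * C‖ ≤ ‖A‖ * ‖B‖ * ‖C‖ :=
  (l2_opNorm_mul _ _).trans (mul_le_mul_of_nonneg_right (l2_opNorm_mul _ _) (norm_nonneg _))

theorem l2_opNorm_transpose_mul_mul_sub_transpose_mul_mul_le {H K : Matrix m n ℝ}
    (M : Matrix m m ℝ) {δ : ℝ} (hH : ‖H‖ ≤ 1) (hHK : ‖H - K‖ ≤ δ) :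
    ‖Hᵀ * M * H - Kᵀ * M * K‖ ≤ (2 * δ + δ ^ 2) * ‖M‖ := by
  have hδ₀ : 0 ≤ δ := (norm_nonneg _).trans hHK
  have hK : ‖K‖ ≤ 1 + δ :=
    calc ‖K‖ ≤ ‖H‖ + ‖H - K‖ := norm_le_norm_add_norm_sub H K
      _ ≤ 1 + δ := add_le_add hH hHK
  have hsplit : Hᵀ * M * H - Kᵀ * M * K = Hᵀ * M * (H - K) + (H - K)ᵀ * M * K := by
    simp only [transpose_sub, Matrix.mul_sub, Matrix.sub_mul]
    abel
  calc ‖Hᵀ * M * H - Kᵀ * M * K‖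
      ≤ ‖Hᵀ‖ * ‖M‖ * ‖H - K‖ + ‖(H - K)ᵀ‖ * ‖M‖ * ‖K‖ := by
        rw [hsplit]
        exact norm_add_le_of_le (l2_opNorm_mul_mul_le _ _ _) (l2_opNorm_mul_mul_le _ _ _)
    _ ≤ 1 * ‖M‖ * δ + δ * ‖M‖ * (1 + δ) := by
        rw [l2_opNorm_transpose, l2_opNorm_transpose]
        gcongr
    _ = (2 * δ + δ ^ 2) * ‖M‖ := by ring

end Matrix

theorem posterior_covariance_localization_bound_precision_general
    {n k : ℕ} (Ω Ωloc : Matrix (Fin n) (Fin n) ℝ)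
    (H Hloc : Matrix (Fin k) (Fin n) ℝ) (R : Matrix (Fin k) (Fin k) ℝ)
    (hH : ‖H‖ ≤ 1) (δΩ δH : ℝ)
    (hδΩ : ‖Ω - Ωloc‖ ≤ δΩ) (hδH : ‖H - Hloc‖ ≤ δH)
    (Δ₂ : ℝ) (hΔ₂ : Δ₂ = δΩ + (2 * δH + δH ^ 2) * ‖R⁻¹‖)
    (hΔ₂small : Δ₂ < ‖(Ω + Hᵀ * R⁻¹ * H)⁻¹‖⁻¹) :
    ‖(Ω + Hᵀ * R⁻¹ * H)⁻¹ - (Ωloc + Hlocᵀ * R⁻¹ * Hloc)⁻¹‖ ≤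
      ‖(Ω + Hᵀ * R⁻¹ * H)⁻¹‖ ^ 2 * Δ₂ / (1 - Δ₂ * ‖(Ω + Hᵀ * R⁻¹ * H)⁻¹‖) := by
  have hprecision : ‖(Ω + Hᵀ * R⁻¹ * H) - (Ωloc + Hlocᵀ * R⁻¹ * Hloc)‖ ≤ Δ₂ :=
    calc _ = ‖(Ω - Ωloc) + (Hᵀ * R⁻¹ * H - Hlocᵀ * R⁻¹ * Hloc)‖ := by congr 1; abel
      _ ≤ δΩ + (2 * δH + δH ^ 2) * ‖R⁻¹‖ := norm_add_le_of_le hδΩ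
          (Matrix.l2_opNorm_transpose_mul_mul_sub_transpose_mul_mul_le R⁻¹ hH hδH)
      _ = Δ₂ := hΔ₂.symm
  simp only [nonsing_inv_eq_ringInverse] at hprecision hΔ₂small ⊢
  exact norm_inverse_sub_inverse_le_s17 hprecision hΔ₂small

/-- localization bound for the posterior covariance of a linear–Gaussian
inverse problem, precision-matrix form.  With `Ĉ = (Ω + Hᵀ R⁻¹ H)⁻¹`,
`Ĉ_loc = (Ω_loc + H_locᵀ R⁻¹ H_loc)⁻¹`, `‖Ω - Ω_loc‖ ≤ δ_Ω`, `‖H - H_loc‖ ≤ δ_H`,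
`‖H‖ ≤ 1`, and `Δ₂ = δ_Ω + (2δ_H + δ_H²) ‖R⁻¹‖ < ‖Ĉ‖⁻¹`, one has
`‖Ĉ - Ĉ_loc‖ ≤ ‖Ĉ‖² Δ₂ / (1 - Δ₂ ‖Ĉ‖)`. -/
theorem posterior_covariance_localization_bound_precision
    {n k : ℕ} (Ω Ωloc : Matrix (Fin n) (Fin n) ℝ) (hΩ : Ω.PosDef) (hΩloc : Ωloc.IsHermitian)
    (H Hloc : Matrix (Fin k) (Fin n) ℝ) (R : Matrix (Fin k) (Fin k) ℝ) (hR : R.PosDef)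
    (hH : ‖H‖ ≤ 1) (δΩ δH : ℝ)
    (hδΩ : ‖Ω - Ωloc‖ ≤ δΩ) (hδH : ‖H - Hloc‖ ≤ δH)
    (Δ₂ : ℝ) (hΔ₂ : Δ₂ = δΩ + (2 * δH + δH ^ 2) * ‖R⁻¹‖)
    (hΔ₂small : Δ₂ < ‖(Ω + Hᵀ * R⁻¹ * H)⁻¹‖⁻¹) :
    ‖(Ω + Hᵀ * R⁻¹ * H)⁻¹ - (Ωloc + Hlocᵀ * R⁻¹ * Hloc)⁻¹‖ ≤
      ‖(Ω + Hᵀ * R⁻¹ * H)⁻¹‖ ^ 2 * Δ₂ / (1 - Δ₂ * ‖(Ω + Hᵀ * R⁻¹ * H)⁻¹‖) :=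
  posterior_covariance_localization_bound_precision_general Ω Ωloc H Hloc R hH δΩ δH hδΩ hδH Δ₂ hΔ₂
    hΔ₂small
end
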